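/- Let Π be a ground logic program over atoms A with rules indexed by a finite type R, and let T(Π) be its transformed program over A ⊎ R. If M' ⊆ A ⊎ R is a stable model of T(Π), then for every rule r of Π, the auxiliary atom dm_r belongs to M' if and only if the body of r is false in M' ∩ A (i.e. body⁺(r) ⊄ M' ∩ A or body⁻(r) ∩ (M' ∩ A) ≠ ∅). -/

import Mathlib

/-- A ground rule: head ← body⁺, not body⁻. -/
structure Rule (A : Type*) where
  head : A
  bodyPos : Finset A
  bodyNeg : Finset A
deriving DecidableEq

/-- The body of rule `r` is true in interpretation `M`:
`body⁺(r) ⊆ M` and `body⁻(r) ∩ M = ∅`. -/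
def BodyTrue {A : Type*} (M : Set A) (r : Rule A) : Prop :=
  ↑r.bodyPos ⊆ M ∧ ∀ a ∈ r.bodyNeg, a ∉ M

/-- `M` is a model of the program `P` (a family of rules indexed by `R`). -/
def IsModel {A R : Type*} (P : R → Rule A) (M : Set A) : Prop :=
  ∀ r, BodyTrue M (P r) → (P r).head ∈ M

/-- `M` is a supported model of `P`: a model in which every true atom
is the head of some rule of `P` whose body is true in `M`. -/
def IsSupported {A R : Type*} (P : R → Rule A) (M : Set A) : Prop :=
  IsModel P M ∧ ∀ a ∈ M, ∃ r, (P r).head = a ∧ ↑(P r).bodyPos ⊆ M ∧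
    ∀ b ∈ (P r).bodyNeg, b ∉ M

/-- `N` is a model of the Gelfond–Lifschitz reduct `P^M`: for every rule of `P`
surviving the reduct (i.e. with `body⁻(r) ∩ M = ∅`), whose negative literals are
removed, if its positive body holds in `N` then so does its head. -/
def ReductModel {A R : Type*} (P : R → Rule A) (M N : Set A) : Prop :=
  ∀ r, (∀ a ∈ (P r).bodyNeg, a ∉ M) → ↑(P r).bodyPos ⊆ N → (P r).head ∈ N

/-- `M` is a stable model of `P`: `M` is the least model of the reduct `P^M`. -/
def IsStable {A R : Type*} (P : R → Rule A) (M : Set A) : Prop :=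
  ReductModel P M M ∧ ∀ N, ReductModel P M N → M ⊆ N

/-- Index type for the rules of the transformed program `T(P)`: one rule
`head(r) ← not dm_r` per rule `r`, one rule `dm_r ← not l` per `l ∈ body⁺(r)`,
and one rule `dm_r ← l` per `l ∈ body⁻(r)`. -/
abbrev TransIdx {A R : Type*} (P : R → Rule A) : Type _ :=
  R ⊕ ((Σ r : R, {l // l ∈ (P r).bodyPos}) ⊕ (Σ r : R, {l // l ∈ (P r).bodyNeg}))

/-- The transformed program `T(P)` over atoms `A ⊕ R`, where `Sum.inr r`
plays the role of the fresh auxiliary atom `dm_r`. -/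
def Transform {A R : Type*} (P : R → Rule A) : TransIdx P → Rule (A ⊕ R)
  | Sum.inl r => ⟨Sum.inl (P r).head, ∅, {Sum.inr r}⟩
  | Sum.inr (Sum.inl ⟨r, l⟩) => ⟨Sum.inr r, ∅, {Sum.inl l.1}⟩
  | Sum.inr (Sum.inr ⟨r, l⟩) => ⟨Sum.inr r, {Sum.inl l.1}, ∅⟩

/-- `Lift P M = M ∪ { dm_r | the body of rule r is false in M }`,
viewing `M ⊆ A` as a subset of `A ⊕ R` via the left injection. -/
def Lift {A R : Type*} (P : R → Rule A) (M : Set A) : Set (A ⊕ R) :=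
  Sum.inl '' M ∪ Sum.inr '' {r | ¬ BodyTrue M (P r)}

/-!
A stable model is supported: each of its atoms is the head of a rule whose body it makes true.
In `T(P)` the rules with head `dm_r` are `dm_r ← not l` (`l ∈ body⁺(r)`) and `dm_r ← l`
(`l ∈ body⁻(r)`), so one of them has a true body exactly when the body of `r` is false; this
gives `dm_r ∈ M' → body false`, and the model property gives the converse.
-/

/- If an atom `a ∈ M` had no rule with head `a` and body true in `M`, then `M \ {a}` would
still be a model of the reduct `P^M`, contradicting minimality. -/
theorem IsStable.isSupported {A R : Type*} {P : R → Rule A} {M : Set A} (h : IsStable P M) :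
    IsSupported P M := by
  obtain ⟨hred, hmin⟩ := h
  refine ⟨fun r hbody => hred r hbody.2 hbody.1, fun a ha => ?_⟩
  by_contra! hunsupp
  have hreduct : ReductModel P M (M \ {a}) := by
    intro r hneg hpos
    have hhead : (P r).head ∈ M := hred r hneg (hpos.trans Set.sdiff_subset)
    refine ⟨hhead, fun hra => ?_⟩
    obtain ⟨b, hb, hbM⟩ := hunsupp r hra (hpos.trans Set.sdiff_subset)
    exact hneg b hb hbM
  exact (hmin _ hreduct ha).2 rfl

theorem exists_transform_head_dm_bodyTrue_iff {A R : Type*} (P : R → Rule A)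
    (M : Set (A ⊕ R)) (r : R) :
    (∃ i, (Transform P i).head = Sum.inr r ∧ BodyTrue M (Transform P i)) ↔
      ¬ BodyTrue (Sum.inl ⁻¹' M) (P r) := by
  constructor
  · rintro ⟨i, hhead, hbody⟩ ⟨hpos, hneg⟩
    rcases i with s | ⟨s, l, hl⟩ | ⟨s, l, hl⟩ <;> simp only [Transform, reduceCtorEq,
      Sum.inr.injEq] at hhead <;> subst hhead
    · exact hbody.2 _ (Finset.mem_singleton_self _) (hpos hl)
    · exact hneg l hl (hbody.1 (Finset.mem_singleton_self _))
  · intro hfalse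
    simp only [BodyTrue, not_and_or, Set.not_subset, not_forall, not_not] at hfalse
    rcases hfalse with ⟨l, hl, hlM⟩ | ⟨l, hl, hlM⟩
    · exact ⟨Sum.inr (Sum.inl ⟨r, l, hl⟩), rfl, by simp [Transform], by
        simpa [Transform] using hlM⟩
    · exact ⟨Sum.inr (Sum.inr ⟨r, l, hl⟩), rfl, by simpa [Transform] using hlM, by
        simp [Transform]⟩

theorem stable_model_of_transform_dm_iff_body_false_general
    {A R : Type*} (P : R → Rule A) (M' : Set (A ⊕ R))
    (h : IsStable (Transform P) M') :
    ∀ r : R, Sum.inr r ∈ M' ↔ ¬ BodyTrue (Sum.inl ⁻¹' M') (P r) := by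
  intro r
  obtain ⟨hmodel, hsupported⟩ := h.isSupported
  rw [← exists_transform_head_dm_bodyTrue_iff]
  exact ⟨hsupported _, fun ⟨i, hhead, hbody⟩ => hhead ▸ hmodel i hbody⟩

/-- If `M'` is a stable model of `T(P)`, then for every rule `r` of `P` the
auxiliary atom `dm_r` belongs to `M'` iff the body of `r` is false in `M' ∩ A`. -/
theorem stable_model_of_transform_dm_iff_body_false
    {A R : Type*} [Fintype R] (P : R → Rule A) (M' : Set (A ⊕ R))
    (h : IsStable (Transform P) M') :
    ∀ r : R, Sum.inr r ∈ M' ↔ ¬ BodyTrue (Sum.inl ⁻¹' M') (P r) :=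
  stable_model_of_transform_dm_iff_body_false_general P M' h
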